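/- Let G be a group in 𝒞_D containing all zero-distributed pairs ({C_n}, 0) with {C_n} ∼_σ 0, and assume that every measurable function k : D → ℂ is a symbol for G (for every measurable k there exists {A_n} ∈ 𝔈 with ({A_n},k) ∈ G). Then G is closed: whenever ({B_{n,m}}_n, k_m) ∈ G for all m, {A_n} ∈ 𝔈, k : D → ℂ measurable, d_acs({B_{n,m}}_n, {A_n}) → 0 and d_m(k_m, k) → 0, one has ({A_n}, k) ∈ G. -/

import Mathlib

open MeasureTheory Filter
open scoped ENNReal NNReal

/-- The singular values of a complex square matrix, arranged in non-increasing order: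
`sv A 0 = σ₁(A) ≥ sv A 1 = σ₂(A) ≥ …` (the square roots of the eigenvalues of `Aᴴ * A`). -/
noncomputable def sv {n : ℕ} (A : Matrix (Fin n) (Fin n) ℂ) : Fin n → ℝ :=
  fun i =>
    (fun j => Real.sqrt ((Matrix.isHermitian_conjTranspose_mul_self A).eigenvalues j))
      (Tuple.sort (fun j => Real.sqrt ((Matrix.isHermitian_conjTranspose_mul_self A).eigenvalues j))
        i.rev)

/-- `p(A) := min_{1 ≤ i ≤ n} ((i-1)/n + σᵢ(A))` (here `i : Fin n` plays the role of `i-1`). -/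
noncomputable def pA {n : ℕ} (A : Matrix (Fin n) (Fin n) ℂ) : ℝ :=
  ⨅ i : Fin n, (((i : ℕ) : ℝ) / n + sv A i)

/-- `ρ({A_n}) := limsup_{n→∞} p(A_n)`, valued in `[0,∞]`. -/
noncomputable def rho (A : (n : ℕ) → Matrix (Fin n) (Fin n) ℂ) : ℝ≥0∞ :=
  Filter.limsup (fun n => ENNReal.ofReal (pA (A n))) Filter.atTop

/-- The a.c.s. pseudometric `d_acs({A_n},{B_n}) := ρ({A_n − B_n})`. -/
noncomputable def dacs (A B : (n : ℕ) → Matrix (Fin n) (Fin n) ℂ) : ℝ≥0∞ :=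
  rho (fun n => A n - B n)

/-- `{A_n} ∼_σ k` : the sequence `{A_n}` has spectral (singular value) symbol `k` on `D`. -/
def SpecSymb {d : ℕ} (D : Set (Fin d → ℝ)) (A : (n : ℕ) → Matrix (Fin n) (Fin n) ℂ)
    (k : (Fin d → ℝ) → ℂ) : Prop :=
  ∀ F : ℝ → ℂ, Continuous F → HasCompactSupport F →
    Filter.Tendsto (fun n : ℕ => (n : ℂ)⁻¹ * ∑ i : Fin n, F (sv (A n) i)) Filter.atTop
      (nhds ((volume D).toReal⁻¹ • ∫ x in D, F ‖k x‖))

/-- `p_m(f) := inf_{E ⊆ D measurable} ( |D∖E|/|D| + esssup_{x∈E} |f(x)| )`, valued in `[0,∞]`. -/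
noncomputable def pm {d : ℕ} (D : Set (Fin d → ℝ)) (f : (Fin d → ℝ) → ℂ) : ℝ≥0∞ :=
  ⨅ (E : Set (Fin d → ℝ)) (_ : MeasurableSet E) (_ : E ⊆ D),
    (volume (D \ E) / volume D + essSup (fun x => (‖f x‖₊ : ℝ≥0∞)) (volume.restrict E))

/-- `d_m(f,g) := p_m(f − g)`. -/
noncomputable def dm {d : ℕ} (D : Set (Fin d → ℝ)) (f g : (Fin d → ℝ) → ℂ) : ℝ≥0∞ :=
  pm D (fun x => f x - g x)

/-- A "group in 𝒞_D": a set `G` of pairs `({A_n}, k)` with `k` measurable and `{A_n} ∼_σ k`,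
closed under addition and negation. -/
def IsGroupIn {d : ℕ} (D : Set (Fin d → ℝ))
    (G : Set (((n : ℕ) → Matrix (Fin n) (Fin n) ℂ) × ((Fin d → ℝ) → ℂ))) : Prop :=
  (∀ p ∈ G, Measurable p.2 ∧ SpecSymb D p.1 p.2) ∧
  (∀ p ∈ G, ∀ q ∈ G, ((fun n => p.1 n + q.1 n), p.2 + q.2) ∈ G) ∧
  (∀ p ∈ G, ((fun n => -(p.1 n)), -p.2) ∈ G)

/-!
Choose `A'` with `(A', k) ∈ G`. Then `({B_{n,m} - A'_n}, k_m - k) ∈ G`, and since `k_m - k` is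
small outside a set of small measure, for large `m` all but a small fraction of the singular
values of `B_{n,m} - A'_n` are small. As `{B_{n,m}}` converges a.c.s. to `{A_n}`, the same holds
for `A_n - B_{n,m}`. Singular value counts are subadditive,
`#{σ(X + Y) > a + b} ≤ #{σ(X) > a} + #{σ(Y) > b}` (intersect the span of the right singular
vectors of `X + Y` with singular value `> a + b` with those of `X`, `Y` with singular values
`≤ a`, `≤ b`), hence `{A_n - A'_n}` is zero-distributed. So `(A - A', 0) ∈ G`, and
`(A, k) = (A - A', 0) + (A', k) ∈ G`.
-/

open Finset Matrix

noncomputable def svCount {n : ℕ} (A : Matrix (Fin n) (Fin n) ℂ) (a : ℝ) : ℕ :=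
  #{i | a < sv A i}

section SingularValues

variable {n : ℕ}

lemma sv_nonneg (A : Matrix (Fin n) (Fin n) ℂ) (i : Fin n) : 0 ≤ sv A i :=
  Real.sqrt_nonneg _

lemma sv_antitone (A : Matrix (Fin n) (Fin n) ℂ) : Antitone (sv A) := fun _ _ hij =>
  Tuple.monotone_sort (fun j => √((isHermitian_conjTranspose_mul_self A).eigenvalues j))
    (Fin.rev_le_rev.2 hij)

lemma sv_neg (A : Matrix (Fin n) (Fin n) ℂ) : sv (-A) = sv A := by
  have h : (-A)ᴴ * -A = Aᴴ * A := by simp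
  unfold sv
  congr! 1
  simp only [h]

lemma svCount_neg (A : Matrix (Fin n) (Fin n) ℂ) (a : ℝ) : svCount (-A) a = svCount A a := by
  simp only [svCount, sv_neg]

lemma svCount_eq_card_lt_sqrt_eigenvalues (A : Matrix (Fin n) (Fin n) ℂ) (a : ℝ) :
    svCount A a = #{j | a < √((isHermitian_conjTranspose_mul_self A).eigenvalues j)} := by
  set g := fun j => √((isHermitian_conjTranspose_mul_self A).eigenvalues j)
  have hsv : ∀ i, sv A i = g (Fin.revPerm.trans (Tuple.sort g) i) := fun _ => rfl
  simp only [svCount, hsv]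
  exact card_equiv (Fin.revPerm.trans (Tuple.sort g)) (fun _ => by simp [g])

lemma svCount_le_of_pA_lt (A : Matrix (Fin n) (Fin n) ℂ) {δ ε : ℝ} (h : pA A < δ)
    (hδε : δ ≤ ε) : (svCount A ε : ℝ) ≤ δ * n := by
  rcases n.eq_zero_or_pos with rfl | hn
  · simp [svCount]
  have : Nonempty (Fin n) := ⟨⟨0, hn⟩⟩
  obtain ⟨i₀, hi₀⟩ := exists_lt_of_ciInf_lt h
  have hsub : ({i | ε < sv A i} : Finset (Fin n)) ⊆ Iio i₀ := fun i hi => by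
    simp only [mem_filter, mem_univ, true_and] at hi
    by_contra hle
    have := sv_antitone A (not_lt.1 (by simpa using hle))
    linarith [sv_nonneg A i₀, (by positivity : (0 : ℝ) ≤ (i₀ : ℕ) / n)]
  have hcount : (svCount A ε : ℝ) ≤ (i₀ : ℕ) := by
    exact_mod_cast (card_le_card hsub).trans (Fin.card_Iio i₀).le
  have hi₀n : ((i₀ : ℕ) : ℝ) / n < δ := by linarith [sv_nonneg A i₀]
  rw [div_lt_iff₀ (by exact_mod_cast hn)] at hi₀n
  linarith

lemma norm_sum_sub_le_of_svCount (A : Matrix (Fin n) (Fin n) ℂ) {F : ℝ → ℂ} {M ε η : ℝ}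
    (hM : ∀ t, ‖F t‖ ≤ M) (hF : ∀ t, 0 ≤ t → t ≤ ε → ‖F t - F 0‖ ≤ η) (hη : 0 ≤ η) :
    ‖∑ i, (F (sv A i) - F 0)‖ ≤ n * η + 2 * M * svCount A ε := by
  calc ‖∑ i, (F (sv A i) - F 0)‖ ≤ ∑ i, ‖F (sv A i) - F 0‖ := norm_sum_le _ _
    _ ≤ ∑ i, (η + 2 * M * if ε < sv A i then 1 else 0) := sum_le_sum fun i _ => ?_
    _ = n * η + 2 * M * svCount A ε := by
      rw [sum_add_distrib, ← mul_sum, sum_boole]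
      simp [svCount]
  split_ifs with hi
  · linarith [norm_sub_le (F (sv A i)) (F 0), hM (sv A i), hM 0]
  · simpa using hF _ (sv_nonneg A i) (not_lt.1 hi)

end SingularValues

lemma eventually_pA_lt_of_rho_lt {A : (n : ℕ) → Matrix (Fin n) (Fin n) ℂ} {δ : ℝ}
    (h : rho A < ENNReal.ofReal δ) : ∀ᶠ n in atTop, pA (A n) < δ := by
  have hδ : 0 < δ := ENNReal.ofReal_pos.1 (zero_le.trans_lt h)
  filter_upwards [eventually_lt_of_limsup_lt h] with n hn
  exact (ENNReal.ofReal_lt_ofReal_iff hδ).1 hn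

section Eigenvectors

variable {ι 𝕜 E : Type*} [Fintype ι] [RCLike 𝕜]

lemma OrthonormalBasis.finrank_span_image [NormedAddCommGroup E] [InnerProductSpace 𝕜 E]
    (b : OrthonormalBasis ι 𝕜 E) (S : Finset ι) :
    Module.finrank 𝕜 (Submodule.span 𝕜 (b '' S)) = #S := by
  rw [Set.image_eq_range]
  exact (finrank_span_eq_card (b.orthonormal.linearIndependent.comp _ Subtype.val_injective)).trans
    (Fintype.card_coe S)

lemma OrthonormalBasis.repr_eq_zero_of_mem_span_image [NormedAddCommGroup E]
    [InnerProductSpace 𝕜 E] [DecidableEq ι] (b : OrthonormalBasis ι 𝕜 E) {S : Set ι}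
    {v : E} (hv : v ∈ Submodule.span 𝕜 (b '' S)) {j : ι} (hj : j ∉ S) : b.repr v j = 0 := by
  induction hv using Submodule.span_induction with
  | mem x hx =>
    obtain ⟨i, hi, rfl⟩ := hx
    simp [b.repr_self, (ne_of_mem_of_not_mem hi hj).symm]
  | zero => simp
  | add x y _ _ hx hy => simp [hx, hy]
  | smul c x _ hx => simp [hx]

variable [DecidableEq ι]

lemma Matrix.IsHermitian.toEuclideanLin_eigenvectorBasis {M : Matrix ι ι 𝕜}
    (hM : M.IsHermitian) (j : ι) :
    toEuclideanLin M (hM.eigenvectorBasis j) = (hM.eigenvalues j : 𝕜) • hM.eigenvectorBasis j := by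
  rw [toLpLin_apply, hM.mulVec_eigenvectorBasis, RCLike.real_smul_eq_coe_smul (K := 𝕜)]
  rfl

lemma Matrix.IsHermitian.inner_toEuclideanLin_self {M : Matrix ι ι 𝕜} (hM : M.IsHermitian)
    (v : EuclideanSpace 𝕜 ι) :
    inner 𝕜 (toEuclideanLin M v) v =
      ∑ j, (hM.eigenvalues j : 𝕜) * (‖hM.eigenvectorBasis.repr v j‖ ^ 2 : ℝ) := by
  rw [← hM.eigenvectorBasis.sum_inner_mul_inner]
  refine sum_congr rfl fun j _ => ?_
  rw [isSymmetric_toEuclideanLin_iff.mpr hM, hM.toEuclideanLin_eigenvectorBasis, inner_smul_right,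
    mul_assoc, ← inner_conj_symm, ← hM.eigenvectorBasis.repr_apply_apply, RCLike.conj_mul]
  norm_cast

lemma Matrix.norm_toEuclideanLin_sq (A : Matrix ι ι 𝕜) (v : EuclideanSpace 𝕜 ι) :
    ‖toEuclideanLin A v‖ ^ 2 =
      ∑ j, (isHermitian_conjTranspose_mul_self A).eigenvalues j *
        ‖(isHermitian_conjTranspose_mul_self A).eigenvectorBasis.repr v j‖ ^ 2 := by
  have hgram : toEuclideanLin (Aᴴ * A) v = (toEuclideanLin A).adjoint (toEuclideanLin A v) := by
    rw [← toEuclideanLin_conjTranspose_eq_adjoint]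
    ext i
    simp [mulVec_mulVec]
  have h := (isHermitian_conjTranspose_mul_self A).inner_toEuclideanLin_self v
  rw [hgram, LinearMap.adjoint_inner_left, inner_self_eq_norm_sq_to_K] at h
  exact_mod_cast h

end Eigenvectors

lemma Submodule.exists_ne_zero_mem_of_two_mul_finrank_lt {K V : Type*} [DivisionRing K]
    [AddCommGroup V] [Module K V] [FiniteDimensional K V] {W U U' : Submodule K V}
    (h : 2 * Module.finrank K V <
      Module.finrank K W + Module.finrank K U + Module.finrank K U') :
    ∃ v ≠ 0, v ∈ W ∧ v ∈ U ∧ v ∈ U' := by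
  by_contra! hv
  have hWUU' := Submodule.finrank_add_finrank_le_of_disjoint (s := W) (t := U ⊓ U')
    (Submodule.disjoint_def.2 fun x hxW hxUU' => by
      by_contra hx
      exact hv x hx hxW (Submodule.mem_inf.1 hxUU').1 (Submodule.mem_inf.1 hxUU').2)
  have hUU' := Submodule.finrank_sup_add_finrank_inf_eq U U'
  have hsup := Submodule.finrank_le (U ⊔ U')
  omega

section RightSingularSubspaces

variable {n : ℕ}

noncomputable def rightSvSpan (A : Matrix (Fin n) (Fin n) ℂ) (P : ℝ → Prop) :
    Submodule ℂ (EuclideanSpace ℂ (Fin n)) :=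
  Submodule.span ℂ ((isHermitian_conjTranspose_mul_self A).eigenvectorBasis ''
    {j | P √((isHermitian_conjTranspose_mul_self A).eigenvalues j)})

lemma finrank_rightSvSpan (A : Matrix (Fin n) (Fin n) ℂ) (P : ℝ → Prop) [DecidablePred P] :
    Module.finrank ℂ (rightSvSpan A P) =
      #{j | P √((isHermitian_conjTranspose_mul_self A).eigenvalues j)} := by
  rw [rightSvSpan, ← coe_filter_univ, OrthonormalBasis.finrank_span_image]

lemma finrank_rightSvSpan_lt (A : Matrix (Fin n) (Fin n) ℂ) (a : ℝ) :
    Module.finrank ℂ (rightSvSpan A (a < ·)) = svCount A a := by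
  rw [finrank_rightSvSpan, svCount_eq_card_lt_sqrt_eigenvalues]

lemma finrank_rightSvSpan_le_add_svCount (A : Matrix (Fin n) (Fin n) ℂ) (a : ℝ) :
    Module.finrank ℂ (rightSvSpan A (· ≤ a)) + svCount A a = n := by
  simp only [finrank_rightSvSpan, svCount_eq_card_lt_sqrt_eigenvalues, ← not_lt]
  rw [add_comm, card_filter_add_card_filter_not, card_univ, Fintype.card_fin]

lemma repr_eq_zero_of_mem_rightSvSpan {A : Matrix (Fin n) (Fin n) ℂ} {P : ℝ → Prop}
    {v : EuclideanSpace ℂ (Fin n)} (hv : v ∈ rightSvSpan A P) {j : Fin n}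
    (hj : ¬ P √((isHermitian_conjTranspose_mul_self A).eigenvalues j)) :
    (isHermitian_conjTranspose_mul_self A).eigenvectorBasis.repr v j = 0 :=
  OrthonormalBasis.repr_eq_zero_of_mem_span_image _ hv hj

lemma norm_toEuclideanLin_le_of_mem_rightSvSpan {A : Matrix (Fin n) (Fin n) ℂ} {a : ℝ}
    (ha : 0 ≤ a) {v : EuclideanSpace ℂ (Fin n)} (hv : v ∈ rightSvSpan A (· ≤ a)) :
    ‖toEuclideanLin A v‖ ≤ a * ‖v‖ := by
  set hA := isHermitian_conjTranspose_mul_self A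
  refine (pow_le_pow_iff_left₀ (norm_nonneg _) (by positivity) two_ne_zero).1 ?_
  rw [norm_toEuclideanLin_sq, mul_pow, ← hA.eigenvectorBasis.sum_sq_norm_inner_right, mul_sum]
  refine sum_le_sum fun j _ => ?_
  rw [← hA.eigenvectorBasis.repr_apply_apply]
  by_cases hj : √(hA.eigenvalues j) ≤ a
  · exact mul_le_mul_of_nonneg_right ((Real.sqrt_le_left ha).1 hj) (by positivity)
  · simp [repr_eq_zero_of_mem_rightSvSpan hv hj]

lemma lt_norm_toEuclideanLin_of_mem_rightSvSpan {A : Matrix (Fin n) (Fin n) ℂ} {a : ℝ}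
    (ha : 0 ≤ a) {v : EuclideanSpace ℂ (Fin n)} (hv : v ∈ rightSvSpan A (a < ·))
    (hv0 : v ≠ 0) : a * ‖v‖ < ‖toEuclideanLin A v‖ := by
  set hA := isHermitian_conjTranspose_mul_self A
  refine (pow_lt_pow_iff_left₀ (by positivity) (norm_nonneg _) two_ne_zero).1 ?_
  rw [norm_toEuclideanLin_sq, mul_pow, ← hA.eigenvectorBasis.sum_sq_norm_inner_right, mul_sum]
  simp only [← hA.eigenvectorBasis.repr_apply_apply]
  obtain ⟨j₀, hj₀⟩ : ∃ j, hA.eigenvectorBasis.repr v j ≠ 0 := by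
    by_contra! h
    exact hv0 (hA.eigenvectorBasis.repr.injective (by ext j; simp [h]))
  have hlt : ∀ j, hA.eigenvectorBasis.repr v j ≠ 0 → a ^ 2 < hA.eigenvalues j := fun j hj =>
    (Real.lt_sqrt ha).1 (not_not.1 (mt (repr_eq_zero_of_mem_rightSvSpan hv) hj))
  refine sum_lt_sum (fun j _ => ?_) ⟨j₀, mem_univ _, ?_⟩
  · by_cases hj : hA.eigenvectorBasis.repr v j = 0
    · simp [hj]
    · exact mul_le_mul_of_nonneg_right (hlt j hj).le (by positivity)
  · exact mul_lt_mul_of_pos_right (hlt j₀ hj₀) (by positivity)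

lemma svCount_add_le (X Y : Matrix (Fin n) (Fin n) ℂ) {a b : ℝ} (ha : 0 ≤ a) (hb : 0 ≤ b) :
    svCount (X + Y) (a + b) ≤ svCount X a + svCount Y b := by
  by_contra! h
  obtain ⟨v, hv0, hvXY, hvX, hvY⟩ :=
    Submodule.exists_ne_zero_mem_of_two_mul_finrank_lt (W := rightSvSpan (X + Y) (a + b < ·))
      (U := rightSvSpan X (· ≤ a)) (U' := rightSvSpan Y (· ≤ b)) (by
        have := finrank_rightSvSpan_le_add_svCount X a
        have := finrank_rightSvSpan_le_add_svCount Y b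
        rw [finrank_euclideanSpace_fin, finrank_rightSvSpan_lt]
        omega)
  have hlower := lt_norm_toEuclideanLin_of_mem_rightSvSpan (add_nonneg ha hb) hvXY hv0
  have hupper : ‖toEuclideanLin (X + Y) v‖ ≤ (a + b) * ‖v‖ := by
    rw [map_add, LinearMap.add_apply, add_mul]
    exact (norm_add_le _ _).trans (add_le_add (norm_toEuclideanLin_le_of_mem_rightSvSpan ha hvX)
      (norm_toEuclideanLin_le_of_mem_rightSvSpan hb hvY))
  exact hupper.not_gt hlower

end RightSingularSubspaces

section SpectralSymbols

variable {d : ℕ} {D : Set (Fin d → ℝ)}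

lemma measureReal_inter_setOf_le_norm_lt_of_pm_lt (hD0 : volume D ≠ 0) (hDfin : volume D ≠ ⊤)
    {f : (Fin d → ℝ) → ℂ} {η : ℝ} (h : pm D f < ENNReal.ofReal η) :
    volume.real (D ∩ {x | η ≤ ‖f x‖}) < η * volume.real D := by
  simp only [pm, iInf_lt_iff] at h
  obtain ⟨E, hE, -, hlt⟩ := h
  have hη : 0 < η := ENNReal.ofReal_pos.1 (zero_le.trans_lt hlt)
  have hDE : volume (D \ E) < ENNReal.ofReal η * volume D :=
    (ENNReal.div_lt_iff (Or.inl hD0) (Or.inl hDfin)).1 (le_self_add.trans_lt hlt)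
  have hfE : ∀ᵐ x, x ∈ E → (‖f x‖₊ : ℝ≥0∞) < ENNReal.ofReal η :=
    (ae_restrict_iff' hE).1 (ae_lt_of_essSup_lt (le_add_self.trans_lt hlt))
  have hsub : D ∩ {x | η ≤ ‖f x‖} ⊆
      (D \ E) ∪ {x | ¬ (x ∈ E → (‖f x‖₊ : ℝ≥0∞) < ENNReal.ofReal η)} := fun x ⟨hxD, hxη⟩ => by
    by_cases hxE : x ∈ E
    · refine Or.inr fun hx => (hx hxE).not_ge ?_
      rw [← enorm_eq_nnnorm, ← ofReal_norm]
      exact ENNReal.ofReal_le_ofReal hxη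
    · exact Or.inl ⟨hxD, hxE⟩
  have hmeas : volume (D ∩ {x | η ≤ ‖f x‖}) < ENNReal.ofReal η * volume D := by
    refine ((measure_mono hsub).trans ((measure_union_le _ _).trans ?_)).trans_lt hDE
    rw [ae_iff.1 hfE, add_zero]
  rw [← ENNReal.ofReal_toReal hDfin, ← ENNReal.ofReal_mul hη.le] at hmeas
  exact ENNReal.toReal_lt_of_lt_ofReal hmeas

lemma SpecSymb.tendsto_real {C : (n : ℕ) → Matrix (Fin n) (Fin n) ℂ}
    {f : (Fin d → ℝ) → ℂ} (h : SpecSymb D C f) {φ : ℝ → ℝ} (hφc : Continuous φ)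
    (hφs : HasCompactSupport φ) :
    Tendsto (fun n : ℕ => (n : ℝ)⁻¹ * ∑ i, φ (sv (C n) i)) atTop
      (nhds ((volume.real D)⁻¹ * ∫ x in D, φ ‖f x‖)) := by
  have hF := (Complex.continuous_re.tendsto _).comp <| h (fun t => (φ t : ℂ))
    (Complex.continuous_ofReal.comp hφc) (hφs.comp_left Complex.ofReal_zero)
  have hL : ∫ x in D, ((φ ‖f x‖ : ℝ) : ℂ) = ((∫ x in D, φ ‖f x‖ : ℝ) : ℂ) :=
    integral_ofReal
  simpa [Function.comp_def, hL, measureReal_def] using hF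

/-- The average of a bump `φ` equal to `1` on `[-r, r]` and to `0` off `(-s, s)` over the
singular values is at most `1 - svCount / n`, and by the symbol it tends to a limit `> 1 - δ`. -/
lemma SpecSymb.eventually_svCount_le {C : (n : ℕ) → Matrix (Fin n) (Fin n) ℂ}
    {f : (Fin d → ℝ) → ℂ} (h : SpecSymb D C f) (hf : Measurable f) (hD0 : volume D ≠ 0)
    (hDfin : volume D ≠ ⊤) {r s δ : ℝ} (hr : 0 < r) (hrs : r < s)
    (hδ : volume.real (D ∩ {x | r < ‖f x‖}) < δ * volume.real D) :
    ∀ᶠ n in atTop, (svCount (C n) s : ℝ) ≤ δ * n := by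
  let φ : ContDiffBump (0 : ℝ) := ⟨r, s, hr, hrs⟩
  have : IsFiniteMeasure (volume.restrict D) := isFiniteMeasure_restrict.2 hDfin
  have hV : 0 < volume.real D := ENNReal.toReal_pos hD0 hDfin
  set S := {x | r < ‖f x‖}
  have hS : MeasurableSet S := measurableSet_lt measurable_const hf.norm
  have hφf : IntegrableOn (fun x => φ ‖f x‖) D :=
    Integrable.of_bound (φ.continuous.measurable.comp hf.norm).aestronglyMeasurable 1
      (ae_of_all _ fun x => by simp [abs_of_nonneg φ.nonneg, φ.le_one])
  have hind : IntegrableOn (Sᶜ.indicator fun _ => (1 : ℝ)) D :=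
    (integrable_const 1).indicator hS.compl
  have hintegral : volume.real D - volume.real (D ∩ S) ≤ ∫ x in D, φ ‖f x‖ := by
    refine le_of_eq_of_le ?_ (setIntegral_mono hind hφf fun x => ?_)
    · rw [integral_indicator_const _ hS.compl, measureReal_restrict_apply hS.compl, smul_eq_mul,
        mul_one, Set.inter_comm Sᶜ, ← Set.sdiff_eq,
        ← measureReal_inter_add_sdiff (s := D) hS hDfin]
      ring
    · by_cases hx : x ∈ S
      · simp [hx, φ.nonneg]
      · simp [hx, φ.one_of_mem_closedBall (x := ‖f x‖) (by simpa [S] using hx)]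
  have hlim : 1 - δ < (volume.real D)⁻¹ * ∫ x in D, φ ‖f x‖ := by
    rw [← div_eq_inv_mul, lt_div_iff₀ hV]
    linarith
  filter_upwards [(tendsto_order.1 (h.tendsto_real φ.continuous φ.hasCompactSupport)).1 _ hlim,
    eventually_gt_atTop 0] with n hn hn0
  have hsum : ∑ i, φ (sv (C n) i) ≤ n - svCount (C n) s := by
    have hpt : ∀ i, φ (sv (C n) i) ≤ 1 - if s < sv (C n) i then 1 else 0 := fun i => by
      split_ifs with hi
      · rw [φ.zero_of_le_dist (by simpa [abs_of_nonneg (sv_nonneg _ _)] using hi.le)]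
        norm_num
      · simpa using φ.le_one
    refine (sum_le_sum fun i _ => hpt i).trans_eq ?_
    rw [sum_sub_distrib, sum_boole]
    simp [svCount]
  rw [← div_eq_inv_mul, lt_div_iff₀ (by exact_mod_cast hn0)] at hn
  linarith

lemma specSymb_zero_of_eventually_svCount_le (hD0 : volume D ≠ 0) (hDfin : volume D ≠ ⊤)
    {C : (n : ℕ) → Matrix (Fin n) (Fin n) ℂ}
    (h : ∀ ε > 0, ∀ δ > 0, ∀ᶠ n in atTop, (svCount (C n) ε : ℝ) ≤ δ * n) :
    SpecSymb D C (fun _ => 0) := by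
  intro F hFc hFs
  have hlim : (volume D).toReal⁻¹ • ∫ x in D, F ‖(0 : ℂ)‖ = F 0 := by
    rw [norm_zero, setIntegral_const, smul_smul, measureReal_def,
      inv_mul_cancel₀ (ENNReal.toReal_pos hD0 hDfin).ne', one_smul]
  rw [hlim, Metric.tendsto_nhds]
  intro η hη
  obtain ⟨M, hM⟩ := hFs.exists_bound_of_continuous hFc
  obtain ⟨ε, hε, hεF⟩ := Metric.continuousAt_iff.1 hFc.continuousAt (η / 2) (half_pos hη)
  have hM0 : 0 ≤ M := (norm_nonneg _).trans (hM 0)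
  filter_upwards [h (ε / 2) (half_pos hε) (η / (4 * (M + 1))) (by positivity),
    eventually_gt_atTop 0] with n hcount hn
  have hsum := norm_sum_sub_le_of_svCount (C n) hM (ε := ε / 2) (fun t ht htε => by
    simpa [dist_eq_norm] using
      (hεF (by rw [Real.dist_eq, sub_zero, abs_of_nonneg ht]; linarith)).le) (half_pos hη).le
  have hkey : 2 * M * (η / (4 * (M + 1))) < η / 2 := by
    rw [mul_div_assoc', div_lt_div_iff₀ (by positivity) two_pos]
    nlinarith
  have hn' : (n : ℂ) ≠ 0 := by exact_mod_cast hn.ne'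
  calc dist ((n : ℂ)⁻¹ * ∑ i, F (sv (C n) i)) (F 0)
      = (n : ℝ)⁻¹ * ‖∑ i, (F (sv (C n) i) - F 0)‖ := by
        rw [dist_eq_norm, sum_sub_distrib, sum_const, card_univ, Fintype.card_fin, nsmul_eq_mul,
          ← Complex.norm_natCast, ← norm_inv, ← norm_mul, mul_sub, inv_mul_cancel_left₀ hn']
    _ ≤ (n : ℝ)⁻¹ * (n * (η / 2) + 2 * M * svCount (C n) (ε / 2)) := by gcongr
    _ ≤ (n : ℝ)⁻¹ * (n * (η / 2) + 2 * M * (η / (4 * (M + 1)) * n)) := by gcongr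
    _ = η / 2 + 2 * M * (η / (4 * (M + 1))) := by field_simp
    _ < η := by linarith

lemma eventually_svCount_le_of_tendsto_dacs {C : ℕ → (n : ℕ) → Matrix (Fin n) (Fin n) ℂ}
    {f : ℕ → (Fin d → ℝ) → ℂ} {Y : (n : ℕ) → Matrix (Fin n) (Fin n) ℂ}
    (hD0 : volume D ≠ 0) (hDfin : volume D ≠ ⊤)
    (hC : ∀ m, SpecSymb D (C m) (f m)) (hf : ∀ m, Measurable (f m))
    (hacs : Tendsto (fun m => dacs (C m) Y) atTop (nhds 0))
    (hpm : Tendsto (fun m => pm D (f m)) atTop (nhds 0)) {ε δ : ℝ} (hε : 0 < ε)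
    (hδ : 0 < δ) : ∀ᶠ n in atTop, (svCount (Y n) ε : ℝ) ≤ δ * n := by
  obtain ⟨δ', hδ', hδ'δ, hδ'ε⟩ : ∃ δ', 0 < δ' ∧ 2 * δ' ≤ δ ∧ δ' ≤ ε / 2 :=
    ⟨min δ ε / 2, by positivity, by linarith [min_le_left δ ε], by linarith [min_le_right δ ε]⟩
  have hη : 0 < min δ' (ε / 4) := lt_min hδ' (by positivity)
  obtain ⟨m, hCY, hfm⟩ := ((hacs.eventually_lt_const (ENNReal.ofReal_pos.2 hδ')).and
    (hpm.eventually_lt_const (ENNReal.ofReal_pos.2 hη))).exists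
  have hsmall : volume.real (D ∩ {x | ε / 4 < ‖f m x‖}) < δ' * volume.real D := by
    refine (measureReal_mono (Set.inter_subset_inter_right D
      fun x (hx : ε / 4 < ‖f m x‖) => (min_le_right _ _).trans hx.le)
      (measure_ne_top_of_subset Set.inter_subset_left hDfin)).trans_lt
      ((measureReal_inter_setOf_le_norm_lt_of_pm_lt hD0 hDfin hfm).trans_le ?_)
    exact mul_le_mul_of_nonneg_right (min_le_left _ _) measureReal_nonneg
  filter_upwards [(hC m).eventually_svCount_le (hf m) hD0 hDfin (by positivity)
    (by linarith : ε / 4 < ε / 2) hsmall, eventually_pA_lt_of_rho_lt hCY] with n hCn hpA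
  have hYC : (svCount (Y n - C m n) (ε / 2) : ℝ) ≤ δ' * n := by
    rw [← neg_sub, svCount_neg]
    exact svCount_le_of_pA_lt _ hpA hδ'ε
  have hweyl := svCount_add_le (C m n) (Y n - C m n) (half_pos hε).le (half_pos hε).le
  rw [add_sub_cancel, add_halves] at hweyl
  have : (svCount (Y n) ε : ℝ) ≤ svCount (C m n) (ε / 2) + svCount (Y n - C m n) (ε / 2) := by
    exact_mod_cast hweyl
  linarith [mul_le_mul_of_nonneg_right hδ'δ (Nat.cast_nonneg (α := ℝ) n)]

end SpectralSymbols

theorem group_is_closed_general {d : ℕ} (D : Set (Fin d → ℝ))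
    (hD0 : 0 < volume D) (hDfin : volume D < ⊤)
    (G : Set (((n : ℕ) → Matrix (Fin n) (Fin n) ℂ) × ((Fin d → ℝ) → ℂ)))
    (hG : IsGroupIn D G)
    (hZ : ∀ C : (n : ℕ) → Matrix (Fin n) (Fin n) ℂ,
      SpecSymb D C (fun _ => 0) → (C, fun _ => (0 : ℂ)) ∈ G)
    (hall : ∀ k : (Fin d → ℝ) → ℂ, Measurable k →
      ∃ A : (n : ℕ) → Matrix (Fin n) (Fin n) ℂ, (A, k) ∈ G) :
    ∀ (Bm : ℕ → (n : ℕ) → Matrix (Fin n) (Fin n) ℂ) (km : ℕ → (Fin d → ℝ) → ℂ)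
      (A : (n : ℕ) → Matrix (Fin n) (Fin n) ℂ) (k : (Fin d → ℝ) → ℂ),
      Measurable k → (∀ m, (Bm m, km m) ∈ G) →
      Filter.Tendsto (fun m => dacs (Bm m) A) Filter.atTop (nhds 0) →
      Filter.Tendsto (fun m => dm D (km m) k) Filter.atTop (nhds 0) → (A, k) ∈ G := by
  intro Bm km A k hk hBm hacs hdm
  obtain ⟨hsymb, hadd, hneg⟩ := hG
  obtain ⟨A', hA'⟩ := hall k hk
  have hdiff : ∀ m, ((fun n => Bm m n - A' n), km m - k) ∈ G := fun m => by
    simpa only [sub_eq_add_neg] using hadd _ (hBm m) _ (hneg _ hA')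
  have hzero : SpecSymb D (fun n => A n - A' n) (fun _ => 0) :=
    specSymb_zero_of_eventually_svCount_le hD0.ne' hDfin.ne fun ε hε δ hδ =>
      eventually_svCount_le_of_tendsto_dacs hD0.ne' hDfin.ne (fun m => (hsymb _ (hdiff m)).2)
        (fun m => (hsymb _ (hdiff m)).1) (by simpa only [dacs, sub_sub_sub_cancel_right] using hacs)
        hdm hε hδ
  convert hadd _ (hZ _ hzero) _ hA' using 2
  · simp
  · exact (zero_add k).symm

/-- if a group `G` in `𝒞_D` contains all zero-distributed pairs and every
measurable function is a symbol for `G`, then `G` is closed. -/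
theorem group_is_closed {d : ℕ} (D : Set (Fin d → ℝ))
    (hD : MeasurableSet D) (hD0 : 0 < volume D) (hDfin : volume D < ⊤)
    (G : Set (((n : ℕ) → Matrix (Fin n) (Fin n) ℂ) × ((Fin d → ℝ) → ℂ)))
    (hG : IsGroupIn D G)
    (hZ : ∀ C : (n : ℕ) → Matrix (Fin n) (Fin n) ℂ,
      SpecSymb D C (fun _ => 0) → (C, fun _ => (0 : ℂ)) ∈ G)
    (hall : ∀ k : (Fin d → ℝ) → ℂ, Measurable k →
      ∃ A : (n : ℕ) → Matrix (Fin n) (Fin n) ℂ, (A, k) ∈ G) :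
    ∀ (Bm : ℕ → (n : ℕ) → Matrix (Fin n) (Fin n) ℂ) (km : ℕ → (Fin d → ℝ) → ℂ)
      (A : (n : ℕ) → Matrix (Fin n) (Fin n) ℂ) (k : (Fin d → ℝ) → ℂ),
      Measurable k → (∀ m, (Bm m, km m) ∈ G) →
      Filter.Tendsto (fun m => dacs (Bm m) A) Filter.atTop (nhds 0) →
      Filter.Tendsto (fun m => dm D (km m) k) Filter.atTop (nhds 0) → (A, k) ∈ G :=
  group_is_closed_general D hD0 hDfin G hG hZ hall
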